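/- Let H be a graph and v a vertex of H such that some neighbor w of v is a simplicial vertex of H (N_H[w] is a clique). Then v is a shedding vertex of H: for every independent set S of H \ N_H[v], there exists x ∈ N_H(v) such that S ∪ {x} is independent in H \ {v}. -/

import Mathlib

open SimpleGraph

variable {V : Type*}

/-- `S` is an independent set of `G`: no two (distinct) members are adjacent. -/
def IsIndepOn (G : SimpleGraph V) (S : Set V) : Prop :=
  S.Pairwise fun u w => ¬ G.Adj u w

/-- The closed neighborhood `N_G[v]` of `v` in `G`. -/
def closedNbhd (G : SimpleGraph V) (v : V) : Set V :=
  {u | G.Adj v u} ∪ {v}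

/-- Vertex decomposability of the independence complex of the induced subgraph of `G`
on the vertex set `A`. -/
inductive VertexDecomp (G : SimpleGraph V) : Set V → Prop
  | discrete (A : Set V) (h : ∀ u ∈ A, ∀ w ∈ A, ¬ G.Adj u w) : VertexDecomp G A
  | shed (A : Set V) (v : V) (hv : v ∈ A)
      (hshed : ∀ S : Set V, S ⊆ A \ closedNbhd G v → IsIndepOn G S →
        ∃ x ∈ A, G.Adj v x ∧ IsIndepOn G (insert x S))
      (hdel : VertexDecomp G (A \ {v}))
      (hlink : VertexDecomp G (A \ closedNbhd G v)) : VertexDecomp G A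

/-- `v` is a shedding vertex of `H`: every independent set avoiding `N_H[v]` can be
extended by a neighbor of `v` to an independent set of `H \ {v}`. -/
def IsSheddingVertex (H : SimpleGraph V) (v : V) : Prop :=
  ∀ S : Set V, S ∩ closedNbhd H v = ∅ → IsIndepOn H S →
    ∃ x, H.Adj v x ∧ IsIndepOn H (insert x S)

/-
Every vertex of `N[w]` other than `v` is adjacent to `v`, because `N[w]` is a clique containing `v`;
hence `N[w] ⊆ N[v]`. An independent set avoiding `N[v]` therefore avoids `N[w]`, and `w` can be
added to it.
-/

namespace SimpleGraph

variable (G : SimpleGraph V)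

lemma isIndepOn_insert {x : V} {S : Set V} :
    IsIndepOn G (insert x S) ↔ IsIndepOn G S ∧ ∀ s ∈ S, x ≠ s → ¬ G.Adj x s := by
  simp only [IsIndepOn, Set.pairwise_insert, G.adj_comm _ x, and_self]

lemma closedNbhd_subset_of_isClique {v w : V} (hadj : G.Adj v w)
    (hclique : G.IsClique (closedNbhd G w)) : closedNbhd G w ⊆ closedNbhd G v := by
  intro u hu
  by_cases huv : u = v
  · exact Or.inr huv
  · exact Or.inl (hclique (Or.inl hadj.symm) hu (Ne.symm huv))

lemma isSheddingVertex_of_closedNbhd_subset {v w : V} (hadj : G.Adj v w)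
    (hsub : closedNbhd G w ⊆ closedNbhd G v) : IsSheddingVertex G v := by
  intro S hS hind
  refine ⟨w, hadj, (isIndepOn_insert G).2 ⟨hind, fun s hs _ hws => ?_⟩⟩
  have hsv : s ∈ S ∩ closedNbhd G v := ⟨hs, hsub (Or.inl hws)⟩
  simp [hS] at hsv

end SimpleGraph

theorem neighbor_of_simplicial_is_shedding {V : Type*}
    (H : SimpleGraph V) (v w : V) (hadj : H.Adj v w)
    (hsimp : H.IsClique (closedNbhd H w)) :
    IsSheddingVertex H v :=
  H.isSheddingVertex_of_closedNbhd_subset hadj (H.closedNbhd_subset_of_isClique hadj hsimp)
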